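/- Let K be a retract of a group G under retraction φ (a homomorphism φ: G → G with image K fixing K pointwise), and let L, R be nonempty subsets of G. Then 2S(G;L,R) is weakly connected if and only if 2S(K;φ(L),φ(R)) is weakly connected and every element of ker φ is weakly connected to the identity within 2S(G;L,R). -/

import Mathlib

open Relation

/-- `w` is a product of a list of `n` elements of `S`. -/
def IsWord {G : Type*} [Group G] (S : Set G) (n : ℕ) (w : G) : Prop :=
  ∃ l : List G, l.length = n ∧ (∀ x ∈ l, x ∈ S) ∧ l.prod = w

/-- The set of all positive-length words in `S`. -/
def WordSet {G : Type*} [Group G] (S : Set G) : Set G :=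
  {w | ∃ n : ℕ, 0 < n ∧ IsWord S n w}

/-- Arc of the two-sided group digraph `2S(G;L,R)`. -/
def Arc {G : Type*} [Group G] (L R : Set G) (g h : G) : Prop :=
  ∃ l ∈ L, ∃ r ∈ R, h = l⁻¹ * g * r

/-- Existence of a directed path (possibly of length 0). -/
def DPath {G : Type*} [Group G] (L R : Set G) : G → G → Prop :=
  ReflTransGen (Arc L R)

/-- Weak connectivity: path ignoring directions. -/
def WeakConn {G : Type*} [Group G] (L R : Set G) : G → G → Prop :=
  ReflTransGen (fun g h => Arc L R g h ∨ Arc L R h g)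

/-- Strong connectivity of two vertices. -/
def StrongConn {G : Type*} [Group G] (L R : Set G) (g h : G) : Prop :=
  DPath L R g h ∧ DPath L R h g

/-!
The retraction corestricts to a surjection `ψ : G → K` that carries `2S(G;L,R)` into
`2S(K;φ(L),φ(R))`. Conversely a weak path in `K` lifts to a weak path in `G` from any preimage of
its start, because each arc is labelled by a pair `(l, r) ∈ L × R` that acts upstairs as well.
Lifting a path from `ψ g` to `1` joins `g` to an element of `ker φ`, which in turn is joined to `1`.
-/

section

variable {G H : Type*} [Group G] [Group H] {L R : Set G}

theorem Arc.map (f : G →* H) {g h : G} (hgh : Arc L R g h) :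
    Arc (f '' L) (f '' R) (f g) (f h) := by
  obtain ⟨l, hl, r, hr, rfl⟩ := hgh
  exact ⟨f l, Set.mem_image_of_mem f hl, f r, Set.mem_image_of_mem f hr, by simp⟩

theorem arc_image_iff (f : G →* H) {a b : H} :
    Arc (f '' L) (f '' R) a b ↔ ∃ l ∈ L, ∃ r ∈ R, b = (f l)⁻¹ * a * f r := by
  simp [Arc]

namespace WeakConn

theorem symm {g h : G} (hgh : WeakConn L R g h) : WeakConn L R h g :=
  haveI : Std.Symm fun g h : G => Arc L R g h ∨ Arc L R h g := ⟨fun _ _ hab => hab.symm⟩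
  ReflTransGen.stdSymm.symm _ _ hgh

theorem map (f : G →* H) {g h : G} (hgh : WeakConn L R g h) :
    WeakConn (f '' L) (f '' R) (f g) (f h) :=
  hgh.lift f fun _ _ hab => hab.imp (Arc.map f) (Arc.map f)

theorem exists_lift (f : G →* H) {g : G} {y : H} (hy : WeakConn (f '' L) (f '' R) (f g) y) :
    ∃ h, f h = y ∧ WeakConn L R g h := by
  induction hy with
  | refl => exact ⟨g, rfl, .refl⟩
  | tail _ hyz ih =>
    obtain ⟨h, rfl, hgh⟩ := ih
    rcases hyz with ⟨_, ⟨l, hl, rfl⟩, _, ⟨r, hr, rfl⟩, rfl⟩ |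
      ⟨_, ⟨l, hl, rfl⟩, _, ⟨r, hr, rfl⟩, hz⟩
    · exact ⟨l⁻¹ * h * r, by simp, hgh.tail (.inl ⟨l, hl, r, hr, rfl⟩)⟩
    · refine ⟨l * h * r⁻¹, ?_, hgh.tail (.inr ⟨l, hl, r, hr, by group⟩)⟩
      rw [map_mul, map_mul, map_inv, hz]
      group

end WeakConn

theorem forall_weakConn_iff_of_surjective (f : G →* H) (hf : Function.Surjective f) :
    (∀ g h : G, WeakConn L R g h) ↔
      (∀ x y : H, WeakConn (f '' L) (f '' R) x y) ∧ ∀ g, f g = 1 → WeakConn L R g 1 := by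
  refine ⟨fun hconn => ⟨fun x y => ?_, fun g _ => hconn g 1⟩, fun ⟨himage, hker⟩ => ?_⟩
  · obtain ⟨g, rfl⟩ := hf x
    obtain ⟨h, rfl⟩ := hf y
    exact (hconn g h).map f
  · have hone (g : G) : WeakConn L R g 1 := by
      obtain ⟨h, hh, hgh⟩ := WeakConn.exists_lift f (himage (f g) 1)
      exact hgh.trans (hker h hh)
    exact fun g h => (hone g).trans (hone h).symm

end

theorem stmt_15_general {G : Type*} [Group G] (K : Subgroup G) (φ : G →* G)
    (hrange : ∀ g : G, φ g ∈ K) (hfix : ∀ k ∈ K, φ k = k)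
    (L R : Set G) :
    (∀ g h : G, WeakConn L R g h) ↔
      ((∀ x y : K, Relation.ReflTransGen (fun a b : K =>
          (∃ l ∈ L, ∃ r ∈ R, (b : G) = (φ l)⁻¹ * (a : G) * φ r) ∨
          (∃ l ∈ L, ∃ r ∈ R, (a : G) = (φ l)⁻¹ * (b : G) * φ r)) x y) ∧
       ∀ h : G, φ h = 1 → WeakConn L R h 1) := by
  let ψ : G →* K := φ.codRestrict K hrange
  have hψ : Function.Surjective ψ := fun k => ⟨k, Subtype.ext (hfix k k.2)⟩
  have hadj : (fun a b : K => Arc (ψ '' L) (ψ '' R) a b ∨ Arc (ψ '' L) (ψ '' R) b a) =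
      fun a b : K =>
        (∃ l ∈ L, ∃ r ∈ R, (b : G) = (φ l)⁻¹ * (a : G) * φ r) ∨
        (∃ l ∈ L, ∃ r ∈ R, (a : G) = (φ l)⁻¹ * (b : G) * φ r) := by
    ext a b
    simp only [arc_image_iff, Subtype.ext_iff, Subgroup.coe_mul, Subgroup.coe_inv]
    rfl
  have hker (h : G) : ψ h = 1 ↔ φ h = 1 := Subtype.ext_iff
  rw [forall_weakConn_iff_of_surjective ψ hψ]
  simp only [hker, WeakConn, hadj]

theorem stmt_15 {G : Type*} [Group G] (K : Subgroup G) (φ : G →* G)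
    (hrange : ∀ g : G, φ g ∈ K) (hfix : ∀ k ∈ K, φ k = k)
    (L R : Set G) (hL : L.Nonempty) (hR : R.Nonempty) :
    (∀ g h : G, WeakConn L R g h) ↔
      ((∀ x y : K, Relation.ReflTransGen (fun a b : K =>
          (∃ l ∈ L, ∃ r ∈ R, (b : G) = (φ l)⁻¹ * (a : G) * φ r) ∨
          (∃ l ∈ L, ∃ r ∈ R, (a : G) = (φ l)⁻¹ * (b : G) * φ r)) x y) ∧
       ∀ h : G, φ h = 1 → WeakConn L R h 1) :=
  stmt_15_general K φ hrange hfix L R
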